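/- Solution of the skewness quadratic program: Let J be a d×d real symmetric positive semidefinite matrix, 𝟙 the all-ones vector with 𝟙 ≠ 0, and h a vector, such that both h and 𝟙 lie in the column space of J. Let J⁺ be the Moore–Penrose pseudoinverse of J and J̃ = J⁺ − (J⁺𝟙)(J⁺𝟙)ᵀ/(𝟙ᵀJ⁺𝟙). Then the supremum of ⟨g,h⟩ − (1/2)·gᵀJg over all g ∈ ℝ^d with ⟨g,𝟙⟩ = 0 equals (1/2)·hᵀJ̃h, and it is attained at g* = J̃h. -/

import Mathlib

/-!
Write `g* = J̃h`. Since `J J⁺` fixes the column space of `J`, which contains `h` and `𝟙`, one gets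
`J g* = h - λ𝟙` for a scalar `λ`: this is the Lagrange condition for the constraint `⟨g, 𝟙⟩ = 0`.
Feasibility `⟨g*, 𝟙⟩ = 0` uses that `J⁺` is symmetric (by uniqueness of the pseudoinverse) and
that `𝟙ᵀJ⁺𝟙 = uᵀJu > 0` for `Ju = 𝟙`. For feasible `g` the Lagrange condition gives
`⟨g, J g*⟩ = ⟨g, h⟩`, so the objective at `g` is its value at `g*` minus `½ (g - g*)ᵀJ(g - g*) ≥ 0`.
-/

open Finset

noncomputable section

/-- `Jp` is the Moore–Penrose pseudoinverse of `J`. -/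
def IsPseudoinverse {d : Type*} [Fintype d] (J Jp : Matrix d d ℝ) : Prop :=
  J * Jp * J = J ∧ Jp * J * Jp = Jp ∧ (J * Jp).transpose = J * Jp ∧
    (Jp * J).transpose = Jp * J

/-- `J̃ = J⁺ − (J⁺𝟙)(J⁺𝟙)ᵀ/(𝟙ᵀJ⁺𝟙)`. -/
def Jtilde {d : Type*} [Fintype d] (Jp : Matrix d d ℝ) : Matrix d d ℝ :=
  Jp - Matrix.of fun i j => (∑ a, Jp i a) * (∑ a, Jp j a) / ∑ a, ∑ b, Jp a b

/-- Bilinear form `vᵀ M w`. -/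
def quadForm {d : Type*} [Fintype d] (M : Matrix d d ℝ) (v w : d → ℝ) : ℝ :=
  ∑ i, ∑ j, v i * M i j * w j

open Matrix

lemma Matrix.PosSemidef.isSymm {n : Type*} {M : Matrix n n ℝ} (hM : M.PosSemidef) : M.IsSymm :=
  isHermitian_iff_isSymm.mp hM.isHermitian

variable {n : Type*} [Fintype n]

lemma Matrix.IsSymm.mulVec_dotProduct {M : Matrix n n ℝ} (hM : M.IsSymm) (x y : n → ℝ) :
    (M *ᵥ x) ⬝ᵥ y = x ⬝ᵥ (M *ᵥ y) := by
  rw [← vecMul_transpose, hM.eq, ← dotProduct_mulVec]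

/-- The value at `g'` falls short of the value at `g` by `½ (g' - g)ᵀ J (g' - g)`. -/
lemma Matrix.PosSemidef.dotProduct_sub_half_le {J : Matrix n n ℝ} (hJ : J.PosSemidef)
    {g g' h : n → ℝ} (hg : g ⬝ᵥ J *ᵥ g = g ⬝ᵥ h) (hg' : g' ⬝ᵥ J *ᵥ g = g' ⬝ᵥ h) :
    g' ⬝ᵥ h - 1 / 2 * (g' ⬝ᵥ J *ᵥ g') ≤ g ⬝ᵥ h - 1 / 2 * (g ⬝ᵥ J *ᵥ g) := by
  have hnonneg : 0 ≤ (g' - g) ⬝ᵥ J *ᵥ (g' - g) := by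
    simpa using hJ.dotProduct_mulVec_nonneg (g' - g)
  have hswap : g ⬝ᵥ J *ᵥ g' = g' ⬝ᵥ J *ᵥ g := by
    rw [← hJ.isSymm.mulVec_dotProduct, dotProduct_comm]
  rw [mulVec_sub, dotProduct_sub, sub_dotProduct, sub_dotProduct, hswap] at hnonneg
  linarith

lemma quadForm_eq_dotProduct_mulVec (M : Matrix n n ℝ) (v w : n → ℝ) :
    quadForm M v w = v ⬝ᵥ (M *ᵥ w) := by
  simp only [quadForm, dotProduct, mulVec, Finset.mul_sum, mul_assoc]

lemma Jtilde_eq (Jp : Matrix n n ℝ) :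
    Jtilde Jp = Jp - (1 ⬝ᵥ Jp *ᵥ 1)⁻¹ • vecMulVec (Jp *ᵥ 1) (Jp *ᵥ 1) := by
  ext i j
  simp [Jtilde, vecMulVec_apply, mulVec, dotProduct, div_eq_inv_mul]

lemma Jtilde_mulVec (Jp : Matrix n n ℝ) (x : n → ℝ) :
    Jtilde Jp *ᵥ x = Jp *ᵥ x - ((Jp *ᵥ 1 ⬝ᵥ x) / (1 ⬝ᵥ Jp *ᵥ 1)) • Jp *ᵥ 1 := by
  rw [Jtilde_eq, sub_mulVec, smul_mulVec, vecMulVec_mulVec, op_smul_eq_smul, smul_smul,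
    div_eq_inv_mul]

lemma one_dotProduct_Jtilde_mulVec {Jp : Matrix n n ℝ} (hJp : Jp.IsSymm)
    (hc : 1 ⬝ᵥ Jp *ᵥ 1 ≠ 0) (x : n → ℝ) : 1 ⬝ᵥ Jtilde Jp *ᵥ x = 0 := by
  rw [Jtilde_mulVec, dotProduct_sub, dotProduct_smul, smul_eq_mul, div_mul_cancel₀ _ hc,
    hJp.mulVec_dotProduct, sub_self]

namespace IsPseudoinverse

variable {J Jp : Matrix n n ℝ}

lemma transpose (hJp : IsPseudoinverse J Jp) : IsPseudoinverse Jᵀ Jpᵀ := by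
  obtain ⟨h₁, h₂, h₃, h₄⟩ := hJp
  refine ⟨?_, ?_, ?_, ?_⟩
  · rw [← transpose_mul, ← transpose_mul, ← Matrix.mul_assoc, h₁]
  · rw [← transpose_mul, ← transpose_mul, ← Matrix.mul_assoc, h₂]
  · rw [← transpose_mul, transpose_transpose, h₄]
  · rw [← transpose_mul, transpose_transpose, h₃]

/-- Penrose's argument: both `A` and `B` equal `A * J * B`. -/
lemma unique {A B : Matrix n n ℝ} (hA : IsPseudoinverse J A) (hB : IsPseudoinverse J B) :
    A = B := by
  obtain ⟨hA₁, hA₂, hA₃, hA₄⟩ := hA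
  obtain ⟨hB₁, hB₂, hB₃, hB₄⟩ := hB
  have hA : A = A * J * B := calc
    A = A * (J * A)ᵀ := by rw [hA₃, ← Matrix.mul_assoc, hA₂]
    _ = A * (J * B * J * A)ᵀ := by rw [hB₁]
    _ = A * (J * A)ᵀ * (J * B)ᵀ := by simp only [transpose_mul, Matrix.mul_assoc]
    _ = A * J * B := by rw [hA₃, hB₃, ← Matrix.mul_assoc, ← Matrix.mul_assoc A, hA₂]
  have hB : B = A * J * B := calc
    B = (B * J)ᵀ * B := by rw [hB₄, hB₂]
    _ = (B * J * A * J)ᵀ * B := by rw [Matrix.mul_assoc B J A, Matrix.mul_assoc B, hA₁]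
    _ = (A * J)ᵀ * (B * J)ᵀ * B := by simp only [transpose_mul, Matrix.mul_assoc]
    _ = A * J * B := by rw [hA₄, hB₄, Matrix.mul_assoc, hB₂]
  rw [hA, ← hB]

lemma isSymm (hJp : IsPseudoinverse J Jp) (hJ : J.IsSymm) : Jp.IsSymm :=
  (hJ.eq ▸ hJp.transpose).unique hJp

lemma mulVec_mulVec_mulVec (hJp : IsPseudoinverse J Jp) (u : n → ℝ) :
    J *ᵥ (Jp *ᵥ (J *ᵥ u)) = J *ᵥ u := by
  rw [mulVec_mulVec, mulVec_mulVec, hJp.1]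

lemma dotProduct_mulVec_pos (hJp : IsPseudoinverse J Jp) (hJ : J.PosSemidef)
    {x : n → ℝ} (hx : x ∈ Set.range J.mulVec) (hx₀ : x ≠ 0) : 0 < x ⬝ᵥ Jp *ᵥ x := by
  obtain ⟨u, rfl⟩ := hx
  rw [hJ.isSymm.mulVec_dotProduct, hJp.mulVec_mulVec_mulVec]
  refine (hJ.dotProduct_mulVec_nonneg u).lt_of_ne' fun h ↦ hx₀ ?_
  exact (hJ.dotProduct_mulVec_zero_iff u).mp h

/-- `J J̃ x` differs from `x` by a multiple of `𝟙`, which is invisible to vectors orthogonal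
to `𝟙`. -/
lemma dotProduct_mulVec_Jtilde_mulVec (hJp : IsPseudoinverse J Jp) {x y : n → ℝ}
    (hx : x ∈ Set.range J.mulVec) (hone : (1 : n → ℝ) ∈ Set.range J.mulVec)
    (hy : y ⬝ᵥ 1 = 0) : y ⬝ᵥ J *ᵥ (Jtilde Jp *ᵥ x) = y ⬝ᵥ x := by
  obtain ⟨u, rfl⟩ := hx
  obtain ⟨v, hv⟩ := hone
  have hJone : J *ᵥ (Jp *ᵥ 1) = 1 := hv ▸ hJp.mulVec_mulVec_mulVec v
  rw [Jtilde_mulVec, mulVec_sub, mulVec_smul, hJp.mulVec_mulVec_mulVec, hJone, dotProduct_sub,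
    dotProduct_smul, hy, smul_zero, sub_zero]

end IsPseudoinverse

theorem skewness_quadratic_program_general
    {d : ℕ} (J Jp : Matrix (Fin d) (Fin d) ℝ)
    (hpsd : J.PosSemidef)
    (hone : (fun _ => (1 : ℝ)) ≠ (0 : Fin d → ℝ))
    (h : Fin d → ℝ)
    (hcol : ∃ u : Fin d → ℝ, J.mulVec u = h)
    (honecol : ∃ u : Fin d → ℝ, J.mulVec u = fun _ => (1 : ℝ))
    (hJp : IsPseudoinverse J Jp) :
    -- the maximizer g* = J̃h is feasible: ⟨g*, 𝟙⟩ = 0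
    (∑ i, (Jtilde Jp).mulVec h i = 0) ∧
    -- the optimal value is attained at g* = J̃h
    ((1 / 2) * quadForm (Jtilde Jp) h h
      = (∑ i, (Jtilde Jp).mulVec h i * h i)
        - (1 / 2) * quadForm J ((Jtilde Jp).mulVec h) ((Jtilde Jp).mulVec h)) ∧
    -- and it is the greatest value of the program
    IsGreatest
      {r : ℝ | ∃ g : Fin d → ℝ, (∑ i, g i) = 0 ∧
        r = (∑ i, g i * h i) - (1 / 2) * quadForm J g g}
      ((1 / 2) * quadForm (Jtilde Jp) h h) := by
  set g := Jtilde Jp *ᵥ h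
  have hc : 0 < 1 ⬝ᵥ Jp *ᵥ 1 := hJp.dotProduct_mulVec_pos hpsd honecol hone
  have hfeas : g ⬝ᵥ 1 = 0 := by
    rw [dotProduct_comm]
    exact one_dotProduct_Jtilde_mulVec (hJp.isSymm hpsd.isSymm) hc.ne' h
  have hstat {y : Fin d → ℝ} (hy : y ⬝ᵥ 1 = 0) : y ⬝ᵥ J *ᵥ g = y ⬝ᵥ h :=
    hJp.dotProduct_mulVec_Jtilde_mulVec hcol honecol hy
  have hval : 1 / 2 * quadForm (Jtilde Jp) h h = g ⬝ᵥ h - 1 / 2 * quadForm J g g := by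
    rw [quadForm_eq_dotProduct_mulVec, quadForm_eq_dotProduct_mulVec, hstat hfeas,
      dotProduct_comm]
    ring
  refine ⟨by rwa [← dotProduct_one], hval, ⟨g, by rwa [← dotProduct_one], hval⟩, ?_⟩
  rintro _ ⟨g', hg', rfl⟩
  rw [← dotProduct_one] at hg'
  rw [hval, quadForm_eq_dotProduct_mulVec, quadForm_eq_dotProduct_mulVec]
  exact hpsd.dotProduct_sub_half_le (hstat hfeas) (hstat hg')

/-- solution of the skewness quadratic program: for a real symmetric
positive semidefinite `J` with `h` and `𝟙 ≠ 0` in its column space, the supremum of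
`⟨g,h⟩ − (1/2)·gᵀJg` over `g` with `⟨g,𝟙⟩ = 0` equals `(1/2)·hᵀJ̃h` and is attained at
`g* = J̃h`. -/
theorem skewness_quadratic_program
    {d : ℕ} (J Jp : Matrix (Fin d) (Fin d) ℝ)
    (hsym : J.transpose = J) (hpsd : J.PosSemidef)
    (hone : (fun _ => (1 : ℝ)) ≠ (0 : Fin d → ℝ))
    (h : Fin d → ℝ)
    (hcol : ∃ u : Fin d → ℝ, J.mulVec u = h)
    (honecol : ∃ u : Fin d → ℝ, J.mulVec u = fun _ => (1 : ℝ))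
    (hJp : IsPseudoinverse J Jp) :
    -- the maximizer g* = J̃h is feasible: ⟨g*, 𝟙⟩ = 0
    (∑ i, (Jtilde Jp).mulVec h i = 0) ∧
    -- the optimal value is attained at g* = J̃h
    ((1 / 2) * quadForm (Jtilde Jp) h h
      = (∑ i, (Jtilde Jp).mulVec h i * h i)
        - (1 / 2) * quadForm J ((Jtilde Jp).mulVec h) ((Jtilde Jp).mulVec h)) ∧
    -- and it is the greatest value of the program
    IsGreatest
      {r : ℝ | ∃ g : Fin d → ℝ, (∑ i, g i) = 0 ∧
        r = (∑ i, g i * h i) - (1 / 2) * quadForm J g g}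
      ((1 / 2) * quadForm (Jtilde Jp) h h) :=
  skewness_quadratic_program_general J Jp hpsd hone h hcol honecol hJp
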